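/- arXiv:1403.4451 — 6 statements merged into one kernel-verified Lean document; each statement's English description precedes it below -/
import Mathlib

section
/- There do not exist positive reals m12, m21, r1, r2, A satisfying simultaneously m12/A + m21/A - r1 - r2 > 0 and -m12*r1/A - m21*r2/A + r1*r2 > 0. Hence the quadratic H(λ) = λ² + (m12/A + m21/A - r1 - r2)λ + (r1*r2 - m12*r1/A - m21*r2/A) never satisfies the Routh–Hurwitz conditions for all roots to have negative real part. -/
/-!
Clearing denominators, a positive trace forces `A < (m12 + m21) / (r1 + r2)`, while a positive
determinant forces `m12 / r2 + m21 / r1 < A`. These are incompatible, because each summand of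
`(m12 + m21) / (r1 + r2)` is bounded by the corresponding summand of `m12 / r2 + m21 / r1`.
-/

lemma add_div_add_le_div_add_div {a b x y : ℝ} (ha : 0 ≤ a) (hb : 0 ≤ b) (hx : 0 < x)
    (hy : 0 < y) : (a + b) / (x + y) ≤ a / y + b / x := by
  rw [add_div]
  gcongr <;> linarith

lemma lt_add_div_add_of_trace_pos {m12 m21 r1 r2 A : ℝ} (hr1 : 0 < r1) (hr2 : 0 < r2) (hA : 0 < A)
    (htrace : m12 / A + m21 / A - r1 - r2 > 0) : A < (m12 + m21) / (r1 + r2) := by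
  rw [lt_div_iff₀ (by positivity)]
  rw [gt_iff_lt, sub_sub, sub_pos, ← add_div, lt_div_iff₀ hA] at htrace
  linarith

lemma div_add_div_lt_of_det_pos {m12 m21 r1 r2 A : ℝ} (hr1 : 0 < r1) (hr2 : 0 < r2) (hA : 0 < A)
    (hdet : -(m12 * r1) / A - m21 * r2 / A + r1 * r2 > 0) : m12 / r2 + m21 / r1 < A := by
  have hcleared : m12 * r1 + m21 * r2 < r1 * r2 * A := by
    have := mul_pos hdet hA
    field_simp at this
    linarith
  rw [div_add_div _ _ hr2.ne' hr1.ne', div_lt_iff₀ (by positivity)]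
  linarith

/-- The Routh–Hurwitz conditions for the quadratic
`H(λ) = λ² + (m12/A + m21/A - r1 - r2)λ + (r1*r2 - m12*r1/A - m21*r2/A)`
can never both hold for positive parameters, hence the origin of the
two-patch saturated-migration model is never stable. -/
theorem stmt_0 :
    ¬ ∃ m12 m21 r1 r2 A : ℝ,
      0 < m12 ∧ 0 < m21 ∧ 0 < r1 ∧ 0 < r2 ∧ 0 < A ∧
      m12 / A + m21 / A - r1 - r2 > 0 ∧
      -(m12 * r1) / A - m21 * r2 / A + r1 * r2 > 0 := by
  rintro ⟨m12, m21, r1, r2, A, hm12, hm21, hr1, hr2, hA, htrace, hdet⟩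
  have hupper := lt_add_div_add_of_trace_pos hr1 hr2 hA htrace
  have hlower := div_add_div_lt_of_det_pos hr1 hr2 hA hdet
  have hcompare := add_div_add_le_div_add_div hm12.le hm21.le hr1 hr2
  linarith
end

section
/- In the unidirectional migration model (m12 = n12 = 0), the Jacobian at the origin has eigenvalues λ1 = r2, λ2 = -(δ2+μ2), λ3 = (r1·A - m21)/A, λ4 = -((δ1+μ1)B + n21)/B. Since r2 > 0, at least one eigenvalue is positive, so the origin is unstable. Moreover all four eigenvalues are real, so none is purely imaginary. -/
set_option maxHeartbeats 1600000

open Polynomial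

/-- In the unidirectional migration model (`m12 = n12 = 0`), the Jacobian at the
origin (in variables `S1, I1, S2, I2`) has characteristic polynomial
`(X - r2)(X + (δ2+μ2))(X - (r1 A - m21)/A)(X + ((δ1+μ1)B + n21)/B)`,
so its eigenvalues are the four stated real numbers; since `r2 > 0` one of them
is positive, hence the origin is unstable, and all eigenvalues are real. -/
theorem stmt_4 (r1 r2 γ1 γ2 δ1 δ2 μ1 μ2 m21 n21 A B : ℝ)
    (hr1 : 0 < r1) (hr2 : 0 < r2) (hγ1 : 0 < γ1) (hγ2 : 0 < γ2)
    (hδ1 : 0 < δ1) (hδ2 : 0 < δ2) (hμ1 : 0 < μ1) (hμ2 : 0 < μ2)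
    (hm21 : 0 < m21) (hn21 : 0 < n21) (hA : 0 < A) (hB : 0 < B)
    (J : Matrix (Fin 4) (Fin 4) ℝ)
    (hJ : J = !![r1 - m21 / A, δ1, 0, 0;
                 0, -(δ1 + μ1) - n21 / B, 0, 0;
                 m21 / A, 0, r2, δ2;
                 0, n21 / B, 0, -(δ2 + μ2)]) :
    J.charpoly =
      (X - C r2) * (X + C (δ2 + μ2)) * (X - C ((r1 * A - m21) / A)) *
        (X + C (((δ1 + μ1) * B + n21) / B)) ∧
    0 < r2 ∧
    (∀ z : ℂ, (J.charpoly.map (algebraMap ℝ ℂ)).IsRoot z → z.im = 0) := by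
  have hA' : A ≠ 0 := ne_of_gt hA
  have hB' : B ≠ 0 := ne_of_gt hB
  have h1 : (r1 * A - m21) / A = r1 - m21 / A := by field_simp
  have h2 : ((δ1 + μ1) * B + n21) / B = (δ1 + μ1) + n21 / B := by field_simp
  have hcp : J.charpoly =
      (X - C r2) * (X + C (δ2 + μ2)) * (X - C ((r1 * A - m21) / A)) *
        (X + C (((δ1 + μ1) * B + n21) / B)) := by
    subst hJ
    rw [Matrix.charpoly, h1, h2]
    have hcm : (!![r1 - m21 / A, δ1, 0, 0;
                 0, -(δ1 + μ1) - n21 / B, 0, 0;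
                 m21 / A, 0, r2, δ2;
                 0, n21 / B, 0, -(δ2 + μ2)] : Matrix (Fin 4) (Fin 4) ℝ).charmatrix =
        !![X - C (r1 - m21 / A), -C δ1, 0, 0;
           0, X - C (-(δ1 + μ1) - n21 / B), 0, 0;
           -C (m21 / A), 0, X - C r2, -C δ2;
           0, -C (n21 / B), 0, X - C (-(δ2 + μ2))] := by
      ext i j
      fin_cases i <;> fin_cases j <;>
        simp [Matrix.charmatrix_apply, Matrix.diagonal]
    rw [hcm]
    simp [Matrix.det_succ_row_zero, Fin.sum_univ_succ, Matrix.det_fin_three,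
      Matrix.submatrix_apply]
    ring
  refine ⟨hcp, hr2, ?_⟩
  intro z hz
  rw [hcp] at hz
  simp only [Polynomial.IsRoot, Polynomial.eval_map, Polynomial.eval₂_mul,
    Polynomial.eval₂_sub, Polynomial.eval₂_add, Polynomial.eval₂_X, Polynomial.eval₂_C,
    mul_eq_zero] at hz
  rcases hz with ((h | h) | h) | h
  · have : z = algebraMap ℝ ℂ r2 := by linear_combination h
    simp [this]
  · have : z = -algebraMap ℝ ℂ (δ2 + μ2) := by linear_combination h
    simp [this]
  · have : z = algebraMap ℝ ℂ ((r1 * A - m21) / A) := by linear_combination h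
    simp [this]
  · have : z = -algebraMap ℝ ℂ (((δ1 + μ1) * B + n21) / B) := by linear_combination h
    simp [this]
end

section
/- In the unidirectional migration model, the equilibrium E2 with S1* = (m21 - r1 A)/r1, I1* = 0, S2* = (δ2+μ2)/γ2, I2* = (γ2(m21 - r1 A) + r2(δ2+μ2))/(γ2 μ2) is unconditionally unstable: if the feasibility condition m21 ≥ r1 A holds (so S1* ≥ 0), then the eigenvalue λ2 = r1(m21 - r1 A)/m21 of the Jacobian at E2 is nonnegative, and strictly positive when m21 > r1 A. -/
/-- The equilibrium `E2` of the unidirectional migration model is unconditionally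
unstable: under the feasibility condition `m21 ≥ r1 A`, the eigenvalue
`λ2 = r1(m21 - r1 A)/m21` of the Jacobian at `E2` is nonnegative, and it is
strictly positive when `m21 > r1 A`. -/
theorem stmt_8 (r1 r2 γ1 γ2 δ1 δ2 μ1 μ2 m21 n21 A B : ℝ)
    (hr1 : 0 < r1) (hr2 : 0 < r2) (hγ1 : 0 < γ1) (hγ2 : 0 < γ2)
    (hδ1 : 0 < δ1) (hδ2 : 0 < δ2) (hμ1 : 0 < μ1) (hμ2 : 0 < μ2)
    (hm21 : 0 < m21) (hn21 : 0 < n21) (hA : 0 < A) (hB : 0 < B)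
    (hfeas : m21 ≥ r1 * A) :
    0 ≤ r1 * (m21 - r1 * A) / m21 ∧
    (m21 > r1 * A → 0 < r1 * (m21 - r1 * A) / m21) := by
  constructor
  · apply div_nonneg _ hm21.le
    exact mul_nonneg hr1.le (by linarith)
  · intro h
    apply div_pos _ hm21
    exact mul_pos hr1 (by linarith)
end

section
/- In the unidirectional migration model, if m21 ≥ r1 A (feasibility of E2), then the condition r2 - γ2·I2* = 0, where I2* = (γ2(m21 - r1 A) + r2(δ2+μ2))/(γ2 μ2), cannot hold; indeed r2 - γ2·I2* = -(γ2(m21 - r1 A) + r2 δ2)/μ2 < 0. Hence the eigenvalue pair λ3,4 = (r2 - γ2 I2* ± sqrt((r2 - γ2 I2*)² - 4 μ2 γ2 I2*))/2 is never purely imaginary, ruling out Hopf bifurcation at E2. -/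
/-- Under the feasibility condition `m21 ≥ r1 A` of the equilibrium `E2`, with
`I2* = (γ2(m21 - r1 A) + r2(δ2+μ2))/(γ2 μ2)`, one has
`r2 - γ2 I2* = -(γ2(m21 - r1 A) + r2 δ2)/μ2 < 0`, hence the eigenvalue pair
`λ3,4 = (r2 - γ2 I2* ± sqrt((r2 - γ2 I2*)² - 4 μ2 γ2 I2*))/2`, i.e. the roots of
`λ² - (r2 - γ2 I2*)λ + μ2 γ2 I2* = 0`, are never purely imaginary. -/
theorem stmt_10 (r1 r2 γ2 δ2 μ2 m21 A : ℝ)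
    (hr1 : 0 < r1) (hr2 : 0 < r2) (hγ2 : 0 < γ2) (hδ2 : 0 < δ2)
    (hμ2 : 0 < μ2) (hm21 : 0 < m21) (hA : 0 < A)
    (hfeas : m21 ≥ r1 * A)
    (I2 : ℝ) (hI2 : I2 = (γ2 * (m21 - r1 * A) + r2 * (δ2 + μ2)) / (γ2 * μ2)) :
    r2 - γ2 * I2 = -(γ2 * (m21 - r1 * A) + r2 * δ2) / μ2 ∧
    r2 - γ2 * I2 < 0 ∧
    (∀ z : ℂ,
      z ^ 2 - ((r2 - γ2 * I2 : ℝ) : ℂ) * z + ((μ2 * γ2 * I2 : ℝ) : ℂ) = 0 →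
      ¬(z.re = 0 ∧ z.im ≠ 0)) := by
  have hne : γ2 * μ2 ≠ 0 := by positivity
  have heq : r2 - γ2 * I2 = -(γ2 * (m21 - r1 * A) + r2 * δ2) / μ2 := by
    rw [hI2]; field_simp; ring
  have hpos : 0 < γ2 * (m21 - r1 * A) + r2 * δ2 := by
    have h1 : 0 ≤ γ2 * (m21 - r1 * A) := by
      apply mul_nonneg hγ2.le; linarith
    nlinarith
  have hneg : r2 - γ2 * I2 < 0 := by
    rw [heq]; apply div_neg_of_neg_of_pos (by linarith) hμ2
  refine ⟨heq, hneg, ?_⟩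
  intro z hz ⟨hre, him⟩
  set a := r2 - γ2 * I2
  have hane : a ≠ 0 := hneg.ne
  have him0 : (z ^ 2 - (a : ℂ) * z + ((μ2 * γ2 * I2 : ℝ) : ℂ)).im = 0 := by
    rw [hz]; simp
  simp [Complex.sub_im, Complex.add_im, Complex.mul_im, pow_two, hre] at him0
  rcases him0 with h | h
  · exact hane h
  · exact him h
end

section
/- In the model where infected do not migrate (n12 = n21 = 0 and migration terms S/(A+S)), the point Z1 = (S1*, I1*, S2*, 0) with S1* = (δ1+μ1)/γ1, I1* = (r1 S1* + r2 S2*)/μ1, and S2* a root of the quadratic r2(A+S1*)·S2² - ℓ·S2 + m21 A S1*, namely S2*± = (ℓ ± sqrt(ℓ² - 4 r2 m21 A S1* (A+S1*)))/(2 r2 (A+S1*)) with ℓ = m12 A + m12 S1* - r2 A² - r2 A S1* - m21 S1*, yields two real positive values for S2* if and only if ℓ > 0 and ℓ² ≥ 4 r2 m21 A S1*(A+S1*); in particular ℓ > 0 is equivalent to m21 S1* + r2 A² + r2 A S1* < m12 A + m12 S1*. -/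
/-- Feasibility of `Z1` in the model where infected do not migrate: with
`S1* = (δ1+μ1)/γ1` and `ℓ = m12 A + m12 S1* - r2 A² - r2 A S1* - m21 S1*`, the two
candidate values `S2*± = (ℓ ± sqrt(ℓ² - 4 r2 m21 A S1*(A+S1*)))/(2 r2 (A+S1*))`
are both positive roots of the quadratic `r2(A+S1*)x² - ℓx + m21 A S1* = 0`
if and only if `ℓ > 0` and `ℓ² ≥ 4 r2 m21 A S1*(A+S1*)`; moreover `ℓ > 0` is
equivalent to `m21 S1* + r2 A² + r2 A S1* < m12 A + m12 S1*`. -/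
theorem stmt_13 (r1 r2 γ1 γ2 δ1 δ2 μ1 μ2 m12 m21 A : ℝ)
    (hr1 : 0 < r1) (hr2 : 0 < r2) (hγ1 : 0 < γ1) (hγ2 : 0 < γ2)
    (hδ1 : 0 < δ1) (hδ2 : 0 < δ2) (hμ1 : 0 < μ1) (hμ2 : 0 < μ2)
    (hm12 : 0 < m12) (hm21 : 0 < m21) (hA : 0 < A)
    (S1 ℓ Sp Sm : ℝ)
    (hS1 : S1 = (δ1 + μ1) / γ1)
    (hℓ : ℓ = m12 * A + m12 * S1 - r2 * A ^ 2 - r2 * A * S1 - m21 * S1)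
    (hSp : Sp = (ℓ + Real.sqrt (ℓ ^ 2 - 4 * r2 * m21 * A * S1 * (A + S1))) /
        (2 * r2 * (A + S1)))
    (hSm : Sm = (ℓ - Real.sqrt (ℓ ^ 2 - 4 * r2 * m21 * A * S1 * (A + S1))) /
        (2 * r2 * (A + S1))) :
    ((0 < Sp ∧ 0 < Sm ∧
        r2 * (A + S1) * Sp ^ 2 - ℓ * Sp + m21 * A * S1 = 0 ∧
        r2 * (A + S1) * Sm ^ 2 - ℓ * Sm + m21 * A * S1 = 0) ↔
      (0 < ℓ ∧ ℓ ^ 2 ≥ 4 * r2 * m21 * A * S1 * (A + S1))) ∧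
    (0 < ℓ ↔ m21 * S1 + r2 * A ^ 2 + r2 * A * S1 < m12 * A + m12 * S1) := by
  have hS1pos : 0 < S1 := by rw [hS1]; positivity
  have ha : 0 < 2 * r2 * (A + S1) := by positivity
  have hane : (2 * r2 * (A + S1)) ≠ 0 := ne_of_gt ha
  have hc : 0 < 4 * r2 * m21 * A * S1 * (A + S1) := by positivity
  set s := Real.sqrt (ℓ ^ 2 - 4 * r2 * m21 * A * S1 * (A + S1)) with hsdef
  have hsnn : 0 ≤ s := Real.sqrt_nonneg _
  have hxp : 2 * r2 * (A + S1) * Sp = ℓ + s := by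
    rw [hSp]; field_simp
  have hxm : 2 * r2 * (A + S1) * Sm = ℓ - s := by
    rw [hSm]; field_simp
  constructor
  · constructor
    · rintro ⟨hp, hm, hqp, hqm⟩
      have h1 : 0 < ℓ + s := by nlinarith [mul_pos ha hp]
      have h2 : 0 < ℓ - s := by nlinarith [mul_pos ha hm]
      have hℓpos : 0 < ℓ := by linarith
      refine ⟨hℓpos, ?_⟩
      by_contra hD
      push_neg at hD
      have hs0 : s = 0 := by
        rw [hsdef]
        exact Real.sqrt_eq_zero'.mpr (by linarith)
      rw [hs0, add_zero] at hxp
      have hzero : ℓ ^ 2 - 4 * r2 * m21 * A * S1 * (A + S1) = 0 := by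
        linear_combination (2 * r2 * (A + S1) * Sp - ℓ) * hxp -
          4 * (r2 * (A + S1)) * hqp
      linarith
    · rintro ⟨hℓpos, hD⟩
      have hs2 : s ^ 2 = ℓ ^ 2 - 4 * r2 * m21 * A * S1 * (A + S1) := by
        rw [hsdef]; exact Real.sq_sqrt (by linarith)
      have hslt : s < ℓ := by nlinarith
      refine ⟨?_, ?_, ?_, ?_⟩
      · rw [hSp]; exact div_pos (by linarith) ha
      · rw [hSm]; exact div_pos (by linarith) ha
      · have h4 : 4 * (r2 * (A + S1)) * (r2 * (A + S1) * Sp ^ 2 - ℓ * Sp + m21 * A * S1) = 0 := by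
          linear_combination (2 * r2 * (A + S1) * Sp + s - ℓ) * hxp + hs2
        have := mul_eq_zero.mp h4
        rcases this with h | h
        · exact absurd h (by positivity)
        · exact h
      · have h4 : 4 * (r2 * (A + S1)) * (r2 * (A + S1) * Sm ^ 2 - ℓ * Sm + m21 * A * S1) = 0 := by
          linear_combination (2 * r2 * (A + S1) * Sm - s - ℓ) * hxm + hs2
        have := mul_eq_zero.mp h4
        rcases this with h | h
        · exact absurd h (by positivity)
        · exact h
  · rw [hℓ]
    constructor <;> intro h <;> linarith
end

section
/- For a monic real quadratic λ² + bλ + c: both roots have strictly negative real part if and only if b > 0 and c > 0 (Routh–Hurwitz criterion in degree 2). Applying this to H(λ) = λ² + (m12/A + m21/A - r1 - r2)λ + (r1 r2 - m12 r1/A - m21 r2/A), stability of the origin would require m12 < A r2 - m21 r2/r1 and m12 > A(r1 + r2) - m21 simultaneously; these two inequalities together with m12 > 0 imply -m21 r2/r1 > 0, a contradiction for positive parameters. -/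
/-!
Routh–Hurwitz in degree 2 via Vieta: if `z` is a root of `λ² + bλ + c`, so is `w = -b - z`, with
`z + w = -b` and `z w = c`. For two complex numbers with real sum and real product, both real
parts are negative iff the sum is negative and the product positive: either both are real, or
they are conjugate with common real part half the sum.

For the two-patch inequalities, clearing denominators turns them into
`(m12 r1 + m21 r2)(r1 + r2) < A r1 r2 (r1 + r2) < (m12 + m21) r1 r2`,
i.e. `m12 r1² + m21 r2² < 0`.
-/

namespace Complex

theorem re_neg_and_re_neg_iff_of_im_eq_zero {z w : ℂ} (hsum : (z + w).im = 0)
    (hprod : (z * w).im = 0) : z.re < 0 ∧ w.re < 0 ↔ (z + w).re < 0 ∧ 0 < (z * w).re := by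
  simp only [add_im, add_re, mul_im, mul_re] at *
  have hw : w.im = -z.im := by linarith
  rw [hw] at hprod ⊢
  have hsplit : z.im * (w.re - z.re) = 0 := by linarith
  constructor
  · rintro ⟨hz, hw⟩
    exact ⟨by linarith, by nlinarith [sq_nonneg z.im]⟩
  · rintro ⟨hs, hp⟩
    rcases mul_eq_zero.1 hsplit with him | hre
    · rw [him] at hp
      constructor <;> nlinarith
    · constructor <;> linarith

theorem quadratic_roots_re_neg_iff (b c : ℝ) :
    (∀ z : ℂ, z ^ 2 + (b : ℂ) * z + (c : ℂ) = 0 → z.re < 0) ↔ (0 < b ∧ 0 < c) := by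
  have vieta : ∀ z : ℂ, z ^ 2 + b * z + c = 0 →
      (-b - z) ^ 2 + b * (-b - z) + c = 0 ∧ (z + (-b - z)).im = 0 ∧ (z * (-b - z)).im = 0 ∧
        (z + (-b - z)).re = -b ∧ (z * (-b - z)).re = c := by
    intro z hz
    have hprod : z * (-b - z) = c := by linear_combination -hz
    refine ⟨by linear_combination hz, ?_, ?_, ?_, ?_⟩ <;> simp [hprod]
  constructor
  · intro hneg
    obtain ⟨z, hz⟩ := exists_quadratic_eq_zero one_ne_zero
      (IsAlgClosed.exists_eq_mul_self (discrim 1 (b : ℂ) c))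
    replace hz : z ^ 2 + b * z + c = 0 := by linear_combination hz
    obtain ⟨hw, hsum, hprod, hsum_re, hprod_re⟩ := vieta z hz
    have := (re_neg_and_re_neg_iff_of_im_eq_zero hsum hprod).1 ⟨hneg z hz, hneg _ hw⟩
    rw [hsum_re, hprod_re] at this
    exact ⟨neg_neg_iff_pos.1 this.1, this.2⟩
  · rintro ⟨hb, hc⟩ z hz
    obtain ⟨-, hsum, hprod, hsum_re, hprod_re⟩ := vieta z hz
    refine ((re_neg_and_re_neg_iff_of_im_eq_zero hsum hprod).2 ?_).1
    rw [hsum_re, hprod_re]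
    exact ⟨neg_neg_iff_pos.2 hb, hc⟩

end Complex

theorem not_two_patch_origin_stable {m12 m21 r1 r2 A : ℝ} (hm12 : 0 < m12) (hm21 : 0 < m21)
    (hr1 : 0 < r1) (hr2 : 0 < r2) :
    ¬(A * (r1 + r2) - m21 < m12 ∧ m12 < A * r2 - m21 * r2 / r1) := by
  rintro ⟨hlow, hhigh⟩
  have hhigh' : m12 * r1 + m21 * r2 < A * r1 * r2 := by
    have := mul_lt_mul_of_pos_right hhigh hr1
    rwa [sub_mul, div_mul_cancel₀ _ hr1.ne', lt_sub_iff_add_lt, mul_right_comm A] at this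
  have hlow' : A * r1 * r2 * (r1 + r2) < (m12 + m21) * (r1 * r2) := by
    nlinarith [mul_pos hr1 hr2]
  have : (m12 * r1 + m21 * r2) * (r1 + r2) < (m12 + m21) * (r1 * r2) :=
    (mul_lt_mul_of_pos_right hhigh' (add_pos hr1 hr2)).trans hlow'
  nlinarith [mul_pos hm12 (mul_pos hr1 hr1), mul_pos hm21 (mul_pos hr2 hr2)]

theorem stmt_17_general (m12 m21 r1 r2 A : ℝ)
    (hm12 : 0 < m12) (hm21 : 0 < m21) (hr1 : 0 < r1) (hr2 : 0 < r2) :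
    (∀ b c : ℝ,
      (∀ z : ℂ, z ^ 2 + (b : ℂ) * z + (c : ℂ) = 0 → z.re < 0) ↔ (0 < b ∧ 0 < c)) ∧
    ¬(A * (r1 + r2) - m21 < m12 ∧ m12 < A * r2 - m21 * r2 / r1) :=
  ⟨Complex.quadratic_roots_re_neg_iff, not_two_patch_origin_stable hm12 hm21 hr1 hr2⟩

/-- Routh–Hurwitz in degree 2: a monic real quadratic `λ² + bλ + c` has both
roots with strictly negative real part iff `b > 0` and `c > 0`. Applied to
`H(λ)` at the origin of the general two-patch model, the two resulting
inequalities `A(r1+r2) - m21 < m12` and `m12 < A r2 - m21 r2/r1` cannot hold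
simultaneously for positive parameters. -/
theorem stmt_17 (m12 m21 r1 r2 A : ℝ)
    (hm12 : 0 < m12) (hm21 : 0 < m21) (hr1 : 0 < r1) (hr2 : 0 < r2) (hA : 0 < A) :
    (∀ b c : ℝ,
      (∀ z : ℂ, z ^ 2 + (b : ℂ) * z + (c : ℂ) = 0 → z.re < 0) ↔ (0 < b ∧ 0 < c)) ∧
    ¬(A * (r1 + r2) - m21 < m12 ∧ m12 < A * r2 - m21 * r2 / r1) :=
  stmt_17_general m12 m21 r1 r2 A hm12 hm21 hr1 hr2
end
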